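/- arXiv:1305.0142 — 4 statements merged into one kernel-verified Lean document; each statement's English description precedes it below -/
import Mathlib

section
/- Let A = (A_n, i) be a tower of abelian groups and for r ≥ 0 let A^(r) be the tower of images A_n^(r) = image(i^r : A_{n+r} → A_n), with bonding maps the restrictions of i. Then for every r, the inclusion of towers A^(r) ↪ A induces isomorphisms lim A^(r) ≅ lim A and lim¹ A^(r) ≅ lim¹ A. -/
/-- The map `1 - i` on the product of a tower of abelian groups. -/
def towerOneMinus (A : ℕ → Type*) [∀ n, AddCommGroup (A n)]
    (i : ∀ n, A (n + 1) →+ A n) : (∀ n, A n) →+ (∀ n, A n) :=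
  AddMonoidHom.mk' (fun a n => a n - i n (a (n + 1))) (by
    intro a b; funext n; simp only [Pi.add_apply, map_add]; abel)

/-- `A_n^(r) = image (i^r : A_{n+r} → A_n)`, defined by
`A_n^(0) = A_n` and `A_n^(r+1) = i_n (A_{n+1}^(r))`. -/
def towerImage (A : ℕ → Type*) [∀ n, AddCommGroup (A n)]
    (i : ∀ n, A (n + 1) →+ A n) : ℕ → ∀ n, AddSubgroup (A n)
  | 0 => fun _ => ⊤
  | (r + 1) => fun n => (towerImage A i r (n + 1)).map (i n)

lemma towerImage_succ_le (A : ℕ → Type) [∀ n, AddCommGroup (A n)]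
    (i : ∀ n, A (n + 1) →+ A n) :
    ∀ r n, towerImage A i (r + 1) n ≤ towerImage A i r n := by
  intro r
  induction r with
  | zero => intro n; exact le_top
  | succ r ih =>
    intro n
    show (towerImage A i (r + 1) (n + 1)).map (i n) ≤ (towerImage A i r (n + 1)).map (i n)
    exact AddSubgroup.map_mono (ih (n + 1))

/-- For each `r`, the inclusion of the tower of images
`A^(r) = (i^r(A_{n+r}))_n` into `A` induces isomorphisms `lim A^(r) ≅ lim A`
and `lim¹ A^(r) ≅ lim¹ A`.  Elementwise: every element of `lim A` already lies
in the subtower (bijectivity on `lim`), and the induced map on `lim¹` is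
surjective and injective. -/
theorem stmt_3 (A : ℕ → Type) [∀ n, AddCommGroup (A n)]
    (i : ∀ n, A (n + 1) →+ A n) (r : ℕ) :
    letI T := towerOneMinus A i
    letI S := towerImage A i
    -- the inclusion induces an isomorphism lim A^(r) ≅ lim A
    (∀ a, T a = 0 → ∀ n, a n ∈ S r n) ∧
    -- the induced map lim¹ A^(r) → lim¹ A is surjective …
    (∀ a : ∀ n, A n, ∃ a' : ∀ n, A n,
      (∀ n, a' n ∈ S r n) ∧ ∃ c, a - a' = T c) ∧
    -- … and injective
    (∀ a' : ∀ n, A n, (∀ n, a' n ∈ S r n) → (∃ c, a' = T c) →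
      ∃ c' : ∀ n, A n, (∀ n, c' n ∈ S r n) ∧ a' = T c') := by
  induction r with
  | zero =>
    refine ⟨fun a _ n => trivial, fun a => ⟨a, fun n => trivial, 0, by simp⟩,
      fun a' _ ⟨c, hc⟩ => ⟨c, fun n => trivial, hc⟩⟩
  | succ r ih =>
    obtain ⟨ih1, ih2, ih3⟩ := ih
    refine ⟨?_, ?_, ?_⟩
    · intro a ha n
      have h : a n = i n (a (n + 1)) := by
        have := congrFun ha n
        simpa [towerOneMinus, sub_eq_zero] using this
      rw [h]
      exact AddSubgroup.mem_map_of_mem _ (ih1 a ha (n + 1))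
    · intro a
      obtain ⟨a', ha', c, hc⟩ := ih2 a
      refine ⟨fun n => i n (a' (n + 1)),
        fun n => AddSubgroup.mem_map_of_mem _ (ha' (n + 1)), c + a', ?_⟩
      funext n
      have hcn := congrFun hc n
      simp only [towerOneMinus, AddMonoidHom.mk'_apply, Pi.sub_apply] at hcn ⊢
      simp only [Pi.add_apply, map_add]
      rw [eq_add_of_sub_eq hcn]
      abel
    · intro a' ha' ⟨c, hc⟩
      obtain ⟨c', hc', hTc'⟩ := ih3 a' (fun n => towerImage_succ_le A i r n (ha' n)) ⟨c, hc⟩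
      refine ⟨fun n => i n (c' (n + 1)) + a' n,
        fun n => add_mem (AddSubgroup.mem_map_of_mem _ (hc' (n + 1))) (ha' n), ?_⟩
      funext n
      have h1 := congrFun hTc' n
      have h2 := congrFun hTc' (n + 1)
      simp only [towerOneMinus, AddMonoidHom.mk'_apply] at h1 h2 ⊢
      rw [h2]
      simp only [map_add, map_sub]
      abel
end

section
/- Let A = (A_n, i) be a tower of abelian groups and A_n^(r) = image(i^r : A_{n+r} → A_n). Then for every n, the map induced by i from lim¹_r A_n^(r) to lim¹_r A_{n-1}^(r) is surjective, and consequently lim¹_n (lim¹_r A_n^(r)) = 0. -/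
variable (A : ℕ → Type*) [∀ n, AddCommGroup (A n)] (i : ∀ n, A (n + 1) →+ A n)

theorem towerImage_antitone (r n : ℕ) :
    towerImage A i (r + 1) n ≤ towerImage A i r n := by
  induction r generalizing n with
  | zero => exact le_top
  | succ r ih => exact AddSubgroup.map_mono (ih (n + 1))

/-- For fixed `n`, the decreasing tower `r ↦ A_n^(r)` (bonding maps the
inclusions); this is the map `1 - incl` on `∏_r A_n^(r)`, whose cokernel is
`lim¹_r A_n^(r)`. -/
def towerImageOneMinus (n : ℕ) :
    (∀ r, towerImage A i r n) →+ (∀ r, towerImage A i r n) :=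
  AddMonoidHom.mk' (fun x r =>
      x r - ⟨(x (r + 1) : A n), towerImage_antitone A i r n (x (r + 1)).2⟩) (by
    intro x y
    funext r
    apply Subtype.ext
    simp only [Pi.add_apply, AddSubgroup.coe_add, AddSubgroup.coe_sub]
    abel)

/-- `lim¹_r A_n^(r)`. -/
def lim1Image (n : ℕ) : Type _ :=
  (∀ r, towerImage A i r n) ⧸ (towerImageOneMinus A i n).range

noncomputable instance (n : ℕ) : AddCommGroup (lim1Image A i n) :=
  QuotientAddGroup.Quotient.addCommGroup _

theorem towerImage_step (r n : ℕ) (x : A (n + 1)) (hx : x ∈ towerImage A i r (n + 1)) :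
    i n x ∈ towerImage A i r n :=
  towerImage_antitone A i r n (AddSubgroup.mem_map_of_mem (i n) hx)

/-- The levelwise map `∏_r A_{n+1}^(r) → ∏_r A_n^(r)` induced by `i`. -/
def towerImagePiMap (n : ℕ) :
    (∀ r, towerImage A i r (n + 1)) →+ (∀ r, towerImage A i r n) :=
  AddMonoidHom.mk' (fun x r => ⟨i n (x r), towerImage_step A i r n _ (x r).2⟩) (by
    intro x y
    funext r
    apply Subtype.ext
    simp)

/-- The map `lim¹_r A_{n+1}^(r) → lim¹_r A_n^(r)` induced by `i`;
the towers `n ↦ lim¹_r A_n^(r)` are formed with these bonding maps. -/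
def lim1ImageMap (n : ℕ) : lim1Image A i (n + 1) →+ lim1Image A i n :=
  QuotientAddGroup.map _ _ (towerImagePiMap A i n) (by
    rintro x ⟨y, rfl⟩
    refine ⟨towerImagePiMap A i n y, ?_⟩
    funext r
    apply Subtype.ext
    simp only [towerImageOneMinus, towerImagePiMap, AddMonoidHom.mk'_apply,
      AddSubgroup.coe_sub, map_sub])

/-- For a tower `A = (A_n, i)` with images
`A_n^(r) = i^r(A_{n+r})`: for every `n` the map
`lim¹_r A_n^(r) → lim¹_r A_{n-1}^(r)` induced by `i` is surjective, and
consequently `lim¹_n (lim¹_r A_n^(r)) = 0`. -/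
theorem stmt_5 (A : ℕ → Type) [∀ n, AddCommGroup (A n)]
    (i : ∀ n, A (n + 1) →+ A n) :
    (∀ n, Function.Surjective (lim1ImageMap A i n)) ∧
    Function.Surjective
      (towerOneMinus (fun n => lim1Image A i n) (fun n => lim1ImageMap A i n)) := by
  have hsurj : ∀ n, Function.Surjective (lim1ImageMap A i n) := by
    intro n xq
    induction xq using QuotientAddGroup.induction_on with
    | _ x =>
      have hmem : ∀ r, ((x (r + 1) : A n)) ∈ (towerImage A i r (n + 1)).map (i n) :=
        fun r => (x (r + 1)).2
      choose y hy hiy using hmem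
      refine ⟨QuotientAddGroup.mk (fun r => ⟨y r, hy r⟩), ?_⟩
      show QuotientAddGroup.mk _ = _
      rw [QuotientAddGroup.eq]
      refine ⟨x, ?_⟩
      funext r
      apply Subtype.ext
      simp only [towerImageOneMinus, towerImagePiMap, AddMonoidHom.mk'_apply,
        AddSubgroup.coe_sub, AddSubgroup.coe_add, AddSubgroup.coe_neg, Pi.add_apply,
        Pi.neg_apply, hiy]
      abel
  refine ⟨hsurj, ?_⟩
  intro b
  choose f hf using fun n (c : lim1Image A i n) => hsurj n c
  refine ⟨fun n => Nat.rec 0 (fun n an => f n (an - b n)) n, ?_⟩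
  funext n
  show _ - lim1ImageMap A i n (f n (_ - b n)) = b n
  rw [hf]
  abel
end

section
/- Let A = (A_n, i) be a tower of abelian groups and A_n^(r) = image(i^r : A_{n+r} → A_n). Then there is a short exact sequence 0 → lim¹_n (lim_r A_n^(r)) → lim¹_n A_n → lim_n (lim¹_r A_n^(r)) → 0. -/
variable (A : ℕ → Type*) [∀ n, AddCommGroup (A n)] (i : ∀ n, A (n + 1) →+ A n)

/-- `lim_r A_n^(r) = ⋂_r A_n^(r)` as a subgroup of `A_n`. -/
def limImage (n : ℕ) : AddSubgroup (A n) := ⨅ r, towerImage A i r n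

/-- The bonding map of the tower `n ↦ lim_r A_n^(r)`, a restriction of `i`. -/
def limImageMap (n : ℕ) : limImage A i (n + 1) →+ limImage A i n :=
  AddMonoidHom.codRestrict ((i n).comp (limImage A i (n + 1)).subtype) _ (by
    rintro ⟨x, hx⟩
    rw [limImage, AddSubgroup.mem_iInf] at hx ⊢
    exact fun r => towerImage_step A i r n x (hx r))

/-- `lim¹` of the tower `n ↦ lim_r A_n^(r)`. -/
def lim1OfLimImage : Type _ :=
  (∀ n, limImage A i n) ⧸
    (towerOneMinus (fun n => limImage A i n) (fun n => limImageMap A i n)).range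

noncomputable instance : AddCommGroup (lim1OfLimImage A i) :=
  QuotientAddGroup.Quotient.addCommGroup _

/-- `lim¹_n A_n`. -/
def lim1Tower : Type _ := (∀ n, A n) ⧸ (towerOneMinus A i).range

noncomputable instance : AddCommGroup (lim1Tower A i) :=
  QuotientAddGroup.Quotient.addCommGroup _

/-- `lim_n (lim¹_r A_n^(r))`, the inverse limit of the tower `n ↦ lim¹_r A_n^(r)`. -/
noncomputable def limOfLim1Image : AddSubgroup (∀ n, lim1Image A i n) :=
  (towerOneMinus (fun n => lim1Image A i n) (fun n => lim1ImageMap A i n)).ker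

/-- The map `lim¹_n (lim_r A_n^(r)) → lim¹_n A_n` induced by the inclusions
`lim_r A_n^(r) ⊆ A_n`. -/
def lim1InclMap : lim1OfLimImage A i →+ lim1Tower A i :=
  QuotientAddGroup.map _ _
    (AddMonoidHom.mk' (fun a n => ((a n : A n))) (by intro a b; funext n; simp)) (by
      rintro x ⟨y, rfl⟩
      refine ⟨fun n => (y n : A n), ?_⟩
      funext n
      show (y n : A n) - i n (y (n + 1)) = ((_ : limImage A i n) : A n)
      simp only [towerOneMinus, AddMonoidHom.mk'_apply, AddSubgroup.coe_sub]
      rfl)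

/-!
Write `S a = (n ↦ i_n a_{n+1})`, so that `lim¹_n A_n` is the cokernel of `1 - S` and
`(S^r a)_n = i^r(a_{n+r}) ∈ A_n^(r)`. The map `lim¹_n A_n → lim_n lim¹_r A_n^(r)` sends the
class of `a` to the classes of `r ↦ (S^r a)_n`. Everything rests on the telescoping identity
`g = ∑_{k<r} S^k (1 - S) g + S^r g`: if `(1 - S) g` lies levelwise in `A^(r)`, so does `g`.
This gives injectivity at once (if `(1 - S) b` lies in `⋂_r A^(r)`, so does `b`), and it shows
that the partial sums produced when lifting an element of `lim_n lim¹_r A_n^(r)` lie at the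
right depth, which gives surjectivity. Exactness in the middle comes from the observation that
for a witness `T_n` of `(S^r a)_n = T_n(r) - T_n(r+1)`, the element `i_n T_{n+1}(r) - T_n(r+1)`
does not depend on `r`, hence lies in `⋂_r A_n^(r)`.
-/

open Finset

def towerShift : AddMonoid.End (∀ n, A n) :=
  AddMonoidHom.pi fun n => (i n).comp (Pi.evalAddMonoidHom A (n + 1))

theorem towerOneMinus_apply (a : ∀ n, A n) : towerOneMinus A i a = a - towerShift A i a := rfl

theorem towerShift_pow_succ_apply (r : ℕ) (a : ∀ n, A n) :
    (towerShift A i ^ (r + 1)) a = towerShift A i ((towerShift A i ^ r) a) := by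
  rw [pow_succ']; rfl

theorem towerShift_pow_mem (r : ℕ) (a : ∀ n, A n) (n : ℕ) :
    (towerShift A i ^ r) a n ∈ towerImage A i r n := by
  induction r generalizing n with
  | zero => trivial
  | succ r ih =>
    rw [towerShift_pow_succ_apply]
    exact AddSubgroup.mem_map_of_mem (i n) (ih (n + 1))

theorem towerShift_pow_mem_of_forall_mem {s : ℕ} {a : ∀ n, A n}
    (ha : ∀ m, a m ∈ towerImage A i s m) (r n : ℕ) :
    (towerShift A i ^ r) a n ∈ towerImage A i s n := by
  induction r generalizing n with
  | zero => exact ha n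
  | succ r ih =>
    rw [towerShift_pow_succ_apply]
    exact towerImage_step A i s n _ (ih (n + 1))

theorem towerOneMinus_towerShift_pow (r : ℕ) (a : ∀ n, A n) :
    towerOneMinus A i ((towerShift A i ^ r) a)
      = (towerShift A i ^ r) a - (towerShift A i ^ (r + 1)) a := by
  rw [towerOneMinus_apply, towerShift_pow_succ_apply]

theorem towerShift_pow_towerOneMinus (r : ℕ) (a : ∀ n, A n) :
    (towerShift A i ^ r) (towerOneMinus A i a)
      = (towerShift A i ^ r) a - (towerShift A i ^ (r + 1)) a := by
  rw [towerOneMinus_apply, map_sub, pow_succ]; rfl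

theorem mem_towerImage_of_towerOneMinus_mem {r : ℕ} {g : ∀ n, A n}
    (hg : ∀ n, towerOneMinus A i g n ∈ towerImage A i r n) (n : ℕ) :
    g n ∈ towerImage A i r n := by
  have telescope : ∑ k ∈ range r, (towerShift A i ^ k) (towerOneMinus A i g)
      = g - (towerShift A i ^ r) g := by
    simp only [towerShift_pow_towerOneMinus, sum_range_sub', pow_zero]
    rfl
  have hg_eq : g n = (∑ k ∈ range r, (towerShift A i ^ k) (towerOneMinus A i g)) n
      + (towerShift A i ^ r) g n := by
    rw [telescope, Pi.sub_apply, sub_add_cancel]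
  rw [hg_eq, Finset.sum_apply]
  exact add_mem (sum_mem fun k _ => towerShift_pow_mem_of_forall_mem A i hg k n)
    (towerShift_pow_mem A i r g n)

theorem mem_range_towerImageOneMinus_of_sum_mem {n : ℕ} (x : ∀ r, towerImage A i r n)
    (hx : ∀ r, ∑ k ∈ range r, (x k : A n) ∈ towerImage A i r n) :
    x ∈ (towerImageOneMinus A i n).range := by
  refine ⟨fun r => ⟨-∑ k ∈ range r, (x k : A n), neg_mem (hx r)⟩, funext fun r => ?_⟩
  apply Subtype.ext
  show -∑ k ∈ range r, (x k : A n) - -∑ k ∈ range (r + 1), (x k : A n) = x r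
  rw [sum_range_succ]
  abel

def diagImage (n : ℕ) : (∀ m, A m) →+ ∀ r, towerImage A i r n :=
  AddMonoidHom.pi fun r =>
    ((Pi.evalAddMonoidHom A n).comp (towerShift A i ^ r)).codRestrict _
      fun a => towerShift_pow_mem A i r a n

theorem diagImage_sub_towerImagePiMap (n : ℕ) (a : ∀ m, A m) :
    diagImage A i n a - towerImagePiMap A i n (diagImage A i (n + 1) a)
      = towerImageOneMinus A i n (diagImage A i n a) := by
  funext r
  apply Subtype.ext
  show (towerShift A i ^ r) a n - i n ((towerShift A i ^ r) a (n + 1))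
    = (towerShift A i ^ r) a n - (towerShift A i ^ (r + 1)) a n
  rw [towerShift_pow_succ_apply]
  rfl

theorem diagImage_towerOneMinus (n : ℕ) (b : ∀ m, A m) :
    diagImage A i n (towerOneMinus A i b) = towerImageOneMinus A i n (diagImage A i n b) := by
  funext r
  apply Subtype.ext
  show (towerShift A i ^ r) (towerOneMinus A i b) n
    = (towerShift A i ^ r) b n - (towerShift A i ^ (r + 1)) b n
  rw [towerShift_pow_towerOneMinus]
  rfl

noncomputable def lim1ImageClass : (∀ m, A m) →+ ∀ n, lim1Image A i n :=
  AddMonoidHom.pi fun n => (QuotientAddGroup.mk' _).comp (diagImage A i n)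

theorem lim1ImageClass_mem_limOfLim1Image (a : ∀ m, A m) :
    lim1ImageClass A i a ∈ limOfLim1Image A i := by
  rw [limOfLim1Image, AddMonoidHom.mem_ker]
  funext n
  show (QuotientAddGroup.mk (diagImage A i n a) : lim1Image A i n)
    - QuotientAddGroup.mk (towerImagePiMap A i n (diagImage A i (n + 1) a)) = 0
  rw [← QuotientAddGroup.mk_sub, QuotientAddGroup.eq_zero_iff, diagImage_sub_towerImagePiMap]
  exact ⟨_, rfl⟩

theorem towerOneMinus_range_le_ker_lim1ImageClass :
    (towerOneMinus A i).range ≤ (lim1ImageClass A i).ker := by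
  rintro _ ⟨b, rfl⟩
  rw [AddMonoidHom.mem_ker]
  funext n
  show (QuotientAddGroup.mk (diagImage A i n (towerOneMinus A i b)) : lim1Image A i n) = 0
  rw [QuotientAddGroup.eq_zero_iff, diagImage_towerOneMinus]
  exact ⟨_, rfl⟩

noncomputable def lim1ToLimOfLim1Image : lim1Tower A i →+ limOfLim1Image A i :=
  QuotientAddGroup.lift _
    ((lim1ImageClass A i).codRestrict _ (lim1ImageClass_mem_limOfLim1Image A i))
    fun _ hx => Subtype.ext (towerOneMinus_range_le_ker_lim1ImageClass A i hx)

theorem lim1InclMap_injective : Function.Injective (lim1InclMap A i) := by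
  rw [injective_iff_map_eq_zero]
  intro q hq
  obtain ⟨ℓ, rfl⟩ := QuotientAddGroup.mk_surjective q
  obtain ⟨b, hb⟩ := (QuotientAddGroup.eq_zero_iff (N := (towerOneMinus A i).range)
    fun n => (ℓ n : A n)).mp hq
  have hb_mem : ∀ n, b n ∈ limImage A i n := fun n =>
    AddSubgroup.mem_iInf.mpr fun r => mem_towerImage_of_towerOneMinus_mem A i
      (fun m => by rw [hb]; exact AddSubgroup.mem_iInf.mp (ℓ m).2 r) n
  exact (QuotientAddGroup.eq_zero_iff ℓ).mpr
    ⟨fun n => ⟨b n, hb_mem n⟩, funext fun n => Subtype.ext (congrFun hb n)⟩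

theorem lim1ToLimOfLim1Image_lim1InclMap (x : lim1OfLimImage A i) :
    lim1ToLimOfLim1Image A i (lim1InclMap A i x) = 0 := by
  obtain ⟨ℓ, rfl⟩ := QuotientAddGroup.mk_surjective x
  refine Subtype.ext (funext fun n => ?_)
  show (QuotientAddGroup.mk (diagImage A i n fun m => (ℓ m : A m)) : lim1Image A i n) = 0
  refine (QuotientAddGroup.eq_zero_iff _).mpr
    (mem_range_towerImageOneMinus_of_sum_mem A i _ fun r => ?_)
  exact sum_mem fun k _ => towerShift_pow_mem_of_forall_mem A i
    (fun m => AddSubgroup.mem_iInf.mp (ℓ m).2 r) k n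

theorem mem_range_lim1InclMap_of_lim1ToLimOfLim1Image_eq_zero {y : lim1Tower A i}
    (hy : lim1ToLimOfLim1Image A i y = 0) : y ∈ Set.range (lim1InclMap A i) := by
  obtain ⟨a, rfl⟩ := QuotientAddGroup.mk_surjective y
  have hclass : ∀ n, (QuotientAddGroup.mk (diagImage A i n a) : lim1Image A i n) = 0 :=
    fun n => congrFun (congrArg Subtype.val hy) n
  choose T hT using fun n => (QuotientAddGroup.eq_zero_iff _).mp (hclass n)
  set W : ℕ → ∀ m, A m := fun r m => T m r
  have hW : ∀ r, W r - W (r + 1) = (towerShift A i ^ r) a := fun r =>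
    funext fun m => congrArg Subtype.val (congrFun (hT m) r)
  have hconst : ∀ r, towerShift A i (W r) - W (r + 1) = towerShift A i (W 0) - W 1 := by
    intro r
    induction r with
    | zero => rfl
    | succ r ih =>
      have h1 : W (r + 1) = W r - (towerShift A i ^ r) a := by rw [← hW r, sub_sub_cancel]
      have h2 : W (r + 1 + 1) = W (r + 1) - (towerShift A i ^ (r + 1)) a := by
        rw [← hW (r + 1), sub_sub_cancel]
      rw [← ih, h2, h1, map_sub, towerShift_pow_succ_apply]
      abel
  set e := towerShift A i (W 0) - W 1 with he
  have he_mem : ∀ n, e n ∈ limImage A i n := fun n => AddSubgroup.mem_iInf.mpr fun r =>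
    match r with
    | 0 => trivial
    | r + 1 => by
      rw [← hconst r]
      exact sub_mem (AddSubgroup.mem_map_of_mem (i n) (T (n + 1) r).2) (T n (r + 1)).2
  refine ⟨QuotientAddGroup.mk fun n => ⟨e n, he_mem n⟩, ?_⟩
  show (QuotientAddGroup.mk e : lim1Tower A i) = QuotientAddGroup.mk a
  have ha : W 0 - W 1 = a := hW 0
  rw [QuotientAddGroup.eq, ← ha]
  exact ⟨W 0, by rw [towerOneMinus_apply, he]; abel⟩

theorem exact_lim1InclMap_lim1ToLimOfLim1Image :
    Function.Exact (lim1InclMap A i) (lim1ToLimOfLim1Image A i) := fun _ =>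
  ⟨mem_range_lim1InclMap_of_lim1ToLimOfLim1Image_eq_zero A i,
    by rintro ⟨x, rfl⟩; exact lim1ToLimOfLim1Image_lim1InclMap A i x⟩

theorem lim1ToLimOfLim1Image_surjective :
    Function.Surjective (lim1ToLimOfLim1Image A i) := by
  rintro ⟨c, hc⟩
  choose u hu using fun n => QuotientAddGroup.mk_surjective (c n)
  have hu_sub : ∀ n,
      u n - towerImagePiMap A i n (u (n + 1)) ∈ (towerImageOneMinus A i n).range := by
    intro n
    have hcn : c n - lim1ImageMap A i n (c (n + 1)) = 0 :=
      congrFun (AddMonoidHom.mem_ker.mp hc) n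
    rw [← hu n, ← hu (n + 1)] at hcn
    exact (QuotientAddGroup.eq_zero_iff _).mp hcn
  choose v hv using hu_sub
  set U : ℕ → ∀ m, A m := fun r m => u m r
  set V : ℕ → ∀ m, A m := fun r m => v m r
  have hUV : ∀ r, towerOneMinus A i (U r) = V r - V (r + 1) := fun r =>
    funext fun m => (congrArg Subtype.val (congrFun (hv m) r)).symm
  refine ⟨QuotientAddGroup.mk (V 0), Subtype.ext (funext fun n => ?_)⟩
  show (QuotientAddGroup.mk (diagImage A i n (V 0)) : lim1Image A i n) = c n
  rw [← hu n, QuotientAddGroup.eq]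
  refine mem_range_towerImageOneMinus_of_sum_mem A i _ fun r => ?_
  set g := ∑ k ∈ range r, (-(towerShift A i ^ k) (V 0) + U k)
  have hg : towerOneMinus A i g = (towerShift A i ^ r) (V 0) - V r := by
    calc towerOneMinus A i g
        = ∑ k ∈ range r, ((V k - (towerShift A i ^ k) (V 0))
            - (V (k + 1) - (towerShift A i ^ (k + 1)) (V 0))) := by
          simp only [g, map_sum, map_add, map_neg, hUV, towerOneMinus_towerShift_pow]
          exact sum_congr rfl fun k _ => by abel
      _ = (towerShift A i ^ r) (V 0) - V r := by
          rw [sum_range_sub', pow_zero]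
          show V 0 - V 0 - _ = _
          abel
  have hg_mem := mem_towerImage_of_towerOneMinus_mem A i (g := g)
    (fun m => by rw [hg]; exact sub_mem (towerShift_pow_mem A i r _ m) (v m r).2) n
  convert hg_mem using 1
  simp only [g, Finset.sum_apply]
  rfl

/-- For a tower `A = (A_n, i)` with images
`A_n^(r) = i^r(A_{n+r})`, there is a short exact sequence
`0 → lim¹_n (lim_r A_n^(r)) → lim¹_n A_n → lim_n (lim¹_r A_n^(r)) → 0`,
the first map being induced by the inclusions `lim_r A_n^(r) ⊆ A_n`. -/
theorem stmt_6 (A : ℕ → Type) [∀ n, AddCommGroup (A n)]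
    (i : ∀ n, A (n + 1) →+ A n) :
    ∃ ψ : lim1Tower A i →+ limOfLim1Image A i,
      Function.Injective (lim1InclMap A i) ∧
      Function.Exact (lim1InclMap A i) ψ ∧
      Function.Surjective ψ :=
  ⟨lim1ToLimOfLim1Image A i, lim1InclMap_injective A i,
    exact_lim1InclMap_lim1ToLimOfLim1Image A i, lim1ToLimOfLim1Image_surjective A i⟩
end

section
/- Over a noetherian commutative ring k, any filtered colimit of injective k-modules is injective. -/
/-!
By Baer's criterion it suffices to extend maps `g : 𝔞 → colim F` from ideals `𝔞` of `k` to `k`.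
Since `k` is noetherian, `𝔞` is finitely presented, so `g` factors through some stage `F j`:
the finitely many generators lift to one stage and the finitely many relations die at a later
one. The stage `F j` is injective, so the factor extends to `k`, and composing with the colimit
injection extends `g`.
-/

open CategoryTheory CategoryTheory.Limits

theorem Submodule.FG.exists_le_of_le_iSup_of_directed {R M ι : Type*} [Semiring R]
    [AddCommMonoid M] [Module R M] [Nonempty ι] {f : ι → Submodule R M}
    (hf : Directed (· ≤ ·) f) {N : Submodule R M} (hN : N.FG) (h : N ≤ ⨆ i, f i) :
    ∃ i, N ≤ f i := by
  obtain ⟨_, ⟨i, rfl⟩, hi⟩ :=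
    (CompleteLattice.isCompactElement_iff_le_of_directed_sSup_le (α := Submodule R M) N).mp
      ((Submodule.fg_iff_compact N).mp hN) _ (Set.range_nonempty f) hf.directedOn_range h
  exact ⟨i, hi⟩

universe u

namespace ModuleCat

variable {R : Type u} [Ring R] {J : Type u} [SmallCategory J] [IsFiltered J]
  (F : J ⥤ ModuleCat.{u} R)

theorem directed_range_colimit_ι :
    Directed (· ≤ ·) fun j => LinearMap.range (colimit.ι F j).hom := by
  intro i j
  obtain ⟨k, f, g, -⟩ := IsFilteredOrEmpty.cocone_objs i j
  refine ⟨k, ?_, ?_⟩ <;>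
  · dsimp only
    rw [← colimit.w F ‹_›, hom_comp, LinearMap.range_comp]
    exact LinearMap.map_le_range

theorem iSup_range_colimit_ι : ⨆ j, LinearMap.range (colimit.ι F j).hom = ⊤ := by
  refine eq_top_iff.mpr fun x _ => ?_
  obtain ⟨j, y, rfl⟩ := Concrete.colimit_exists_rep F x
  exact Submodule.mem_iSup_of_mem j (LinearMap.mem_range_self _ y)

theorem exists_le_range_colimit_ι_of_fg {N : Submodule R (colimit F : ModuleCat R)}
    (hN : N.FG) : ∃ j, N ≤ LinearMap.range (colimit.ι F j).hom :=
  have : Nonempty J := IsFiltered.nonempty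
  hN.exists_le_of_le_iSup_of_directed (directed_range_colimit_ι F)
    ((iSup_range_colimit_ι F).symm ▸ le_top)

theorem directed_ker_map_under (j : J) :
    Directed (· ≤ ·) fun u : Under j => LinearMap.ker (F.map u.hom).hom := by
  have ker_le {k l : J} (f : j ⟶ k) (g : k ⟶ l) :
      LinearMap.ker (F.map f).hom ≤ LinearMap.ker (F.map (f ≫ g)).hom := by
    rw [F.map_comp, hom_comp, LinearMap.ker_comp]
    exact LinearMap.ker_le_comap _
  intro u v
  obtain ⟨k, f, g, h⟩ := IsFiltered.span u.hom v.hom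
  exact ⟨Under.mk (u.hom ≫ f), ker_le u.hom f, h ▸ ker_le v.hom g⟩

theorem ker_colimit_ι_le_iSup_ker_map (j : J) :
    LinearMap.ker (colimit.ι F j).hom ≤ ⨆ u : Under j, LinearMap.ker (F.map u.hom).hom := by
  intro x hx
  obtain ⟨k, f, hf⟩ := Concrete.colimit_rep_eq_zero R F j x hx
  exact Submodule.mem_iSup_of_mem (Under.mk f) hf

theorem exists_le_ker_map_of_fg {j : J} {N : Submodule R (F.obj j)} (hN : N.FG)
    (h : N ≤ LinearMap.ker (colimit.ι F j).hom) :
    ∃ (k : J) (f : j ⟶ k), N ≤ LinearMap.ker (F.map f).hom := by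
  have : Nonempty (Under j) := ⟨Under.mk (𝟙 j)⟩
  obtain ⟨u, hu⟩ := hN.exists_le_of_le_iSup_of_directed (directed_ker_map_under F j)
    (h.trans (ker_colimit_ι_le_iSup_ker_map F j))
  exact ⟨u.right, u.hom, hu⟩

theorem exists_colimit_ι_comp_eq_of_finitePresentation (M : Type u) [AddCommGroup M] [Module R M]
    [Module.FinitePresentation R M] (g : M →ₗ[R] (colimit F : ModuleCat R)) :
    ∃ (k : J) (h : M →ₗ[R] F.obj k), (colimit.ι F k).hom ∘ₗ h = g := by
  obtain ⟨n, K, e, hK⟩ := Module.FinitePresentation.exists_fin R M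
  set g' := (g ∘ₗ e.symm.toLinearMap) ∘ₗ K.mkQ
  obtain ⟨j, hj⟩ := exists_le_range_colimit_ι_of_fg F
    (LinearMap.range_eq_map g' ▸ Module.Finite.fg_top.map g')
  obtain ⟨ψ, hψ⟩ := Module.projective_lifting_property (colimit.ι F j).hom.rangeRestrict
    (g'.codRestrict _ fun c => hj (LinearMap.mem_range_self g' c))
    (colimit.ι F j).hom.surjective_rangeRestrict
  have hψ : (colimit.ι F j).hom ∘ₗ ψ = g' :=
    LinearMap.ext fun c => congr_arg Subtype.val (LinearMap.congr_fun hψ c)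
  obtain ⟨k, f, hf⟩ := exists_le_ker_map_of_fg F (hK.map ψ) <| by
    rw [Submodule.map_le_iff_le_comap, ← LinearMap.ker_comp, hψ]
    exact K.ker_mkQ.ge.trans (LinearMap.ker_le_ker_comp _ _)
  have hfψ : K ≤ LinearMap.ker ((F.map f).hom ∘ₗ ψ) := by
    rw [LinearMap.ker_comp]
    exact Submodule.map_le_iff_le_comap.mp hf
  refine ⟨k, K.liftQ _ hfψ ∘ₗ e.toLinearMap, LinearMap.ext fun m => ?_⟩
  obtain ⟨c, hc⟩ := K.mkQ_surjective (e m)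
  calc (colimit.ι F k).hom (K.liftQ _ hfψ (e m))
      = (colimit.ι F k).hom ((F.map f).hom (ψ c)) := by rw [← hc]; rfl
    _ = (colimit.ι F j).hom (ψ c) := colimit.w_apply F f (ψ c)
    _ = g m := by rw [← LinearMap.comp_apply, hψ]; simp [g', hc]

theorem baer_colimit_of_injective [IsNoetherianRing R] [∀ j, Module.Injective R (F.obj j)] :
    Module.Baer R (colimit F : ModuleCat R) := by
  intro I g
  have := Module.finitePresentation_of_finite R I
  obtain ⟨k, h, rfl⟩ := exists_colimit_ι_comp_eq_of_finitePresentation F I g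
  obtain ⟨h', rfl⟩ :=
    Module.Injective.extension_property R (F.obj k) I R I.subtype I.injective_subtype h
  exact ⟨(colimit.ι F k).hom ∘ₗ h', fun _ _ => rfl⟩

end ModuleCat

/-- Over a commutative noetherian ring `k`, any filtered
colimit of injective `k`-modules is injective. -/
theorem stmt_7 (k : Type) [CommRing k] [IsNoetherianRing k]
    (I : Type) [SmallCategory I] [IsFiltered I]
    (F : I ⥤ ModuleCat.{0} k)
    (hinj : ∀ i : I, Injective (F.obj i)) :
    Injective (colimit F) := by
  have (i : I) : Module.Injective k (F.obj i) :=
    Module.injective_module_of_injective_object k (F.obj i) (inj := hinj i)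
  exact Module.injective_object_of_injective_module k _
    (inj := (ModuleCat.baer_colimit_of_injective F).injective)
end
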